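/- Let ρ be a proximate order with limit ρ∞ and let μ ∈ 𝔐_∞(ρ) be a (real or complex) Radon measure that is regular in the sense of Azarin, with Fr[μ] = {ν}. Then there exists a complex number c such that dν(r) = c·r^{ρ∞ − 1} dr, i.e. ν is absolutely continuous with density c·r^{ρ∞−1}. -/

import Mathlib

open MeasureTheory Filter Topology Set
open scoped ENNReal

noncomputable section

/-- `V ρ r = r ^ ρ(r)`. -/
def V (ρ : ℝ → ℝ) (r : ℝ) : ℝ := r ^ ρ r

/-- A proximate order (in the sense of Valiron) with limit `l` at infinity:
`ρ` is locally absolutely continuous on `(0,∞)`, `ρ(r) → l`, and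
`r · log r · ρ'(r) → 0` as `r → ∞`. -/
structure IsProximateOrder (ρ : ℝ → ℝ) (l : ℝ) : Prop where
  locAC : ∀ a : ℝ, 0 < a → ∀ b : ℝ, a ≤ b →
    MeasureTheory.IntegrableOn (deriv ρ) (Set.Icc a b) ∧
      ∀ x ∈ Set.Icc a b, ρ x = ρ a + ∫ t in a..x, deriv ρ t
  tendsto_lim : Filter.Tendsto ρ Filter.atTop (nhds l)
  tendsto_deriv : Filter.Tendsto (fun r => r * Real.log r * deriv ρ r) Filter.atTop (nhds 0)

/-- A (real or complex) Radon measure on `(0,∞)`, given in polar form: its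
total variation `var` (a positive Borel measure, finite on compact subsets of
`(0,∞)` and concentrated on `(0,∞)`) together with a measurable, a.e.
unimodular direction density `dir`, so that `dμ = dir · d var`. -/
structure RadonC where
  var : Measure ℝ
  dir : ℝ → ℂ
  measurable_dir : Measurable dir
  unimodular : ∀ᵐ x ∂var, ‖dir x‖ = 1
  locFin : ∀ a b : ℝ, 0 < a → var (Set.Icc a b) < ⊤
  conc : var (Set.Iic 0) = 0

/-- Value of the measure on a set: `μ(E) = ∫_E dir d var`. -/
def RadonC.set (μ : RadonC) (E : Set ℝ) : ℂ := ∫ x in E, μ.dir x ∂μ.var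

/-- Integral of a real function against the measure. -/
def RadonC.testInt (μ : RadonC) (f : ℝ → ℝ) : ℂ := ∫ x, (f x : ℂ) * μ.dir x ∂μ.var

/-- Test functions: continuous with compact support contained in `(0,∞)`. -/
def IsTest (f : ℝ → ℝ) : Prop :=
  Continuous f ∧ HasCompactSupport f ∧ tsupport f ⊆ Set.Ioi 0

/-- `∫ f dμ_t`, where `μ_t(E) = μ(tE)/V(t)`. -/
def scaledTestInt (ρ : ℝ → ℝ) (μ : RadonC) (t : ℝ) (f : ℝ → ℝ) : ℂ :=
  (V ρ t : ℂ)⁻¹ * ∫ x, (f (x / t) : ℂ) * μ.dir x ∂μ.var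

/-- Wide convergence of the scalings `μ_{t n}` to `ν`. -/
def WideTendsto (ρ : ℝ → ℝ) (μ : RadonC) (t : ℕ → ℝ) (ν : RadonC) : Prop :=
  ∀ f : ℝ → ℝ, IsTest f →
    Filter.Tendsto (fun n => scaledTestInt ρ μ (t n) f) Filter.atTop (nhds (ν.testInt f))

/-- The Azarin limit set `Fr[μ]` of `μ` relative to the proximate order `ρ`. -/
def AzarinSet (ρ : ℝ → ℝ) (μ : RadonC) : Set RadonC :=
  {ν | ∃ t : ℕ → ℝ, Filter.Tendsto t Filter.atTop Filter.atTop ∧ WideTendsto ρ μ t ν}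

/-- `μ ∈ 𝔐_∞(ρ)` : `sup_{r ≥ 1} |μ|([r, e r])/V(r) < ∞`. -/
def MemMInfty (ρ : ℝ → ℝ) (μ : RadonC) : Prop :=
  ∃ C : ℝ, ∀ r : ℝ, 1 ≤ r → μ.var (Set.Icc r (Real.exp 1 * r)) ≤ ENNReal.ofReal (C * V ρ r)

/-- Equality of Radon measures on `(0,∞)` (tested against test functions). -/
def WideEq (ν₁ ν₂ : RadonC) : Prop := ∀ f : ℝ → ℝ, IsTest f → ν₁.testInt f = ν₂.testInt f

/-
Since `V(s t) / V(t) → s ^ ρ∞`, the dilation `s ^ (-ρ∞) ν(s ·)` of an Azarin limit measure `ν`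
is again an Azarin limit measure (along `s tₙ`), so regularity forces `ν` to be homogeneous:
`ν(s E) = s ^ ρ∞ ν(E)`, first against test functions and then, by dominated convergence, on
intervals. In logarithmic coordinates `ψ(x) = ν((1, eˣ])` this is the functional equation
`ψ(a + b) = ψ(a) + e ^ (ρ∞ a) ψ(b)`. For `ρ∞ ≠ 0` its symmetry in `a, b` gives
`ψ(a) = k (1 - e ^ (ρ∞ a))`; for `ρ∞ = 0`, `ψ` is additive and right-continuous at `0`, hence
linear. Either way `ν` agrees with `c r ^ (ρ∞ - 1) dr` on intervals, hence on all Borel sets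
bounded away from `0` and `∞`.
-/

open scoped Pointwise

namespace IsProximateOrder

variable {ρ : ℝ → ℝ} {l : ℝ}

lemma abs_sub_le_of_norm_deriv_le (h : IsProximateOrder ρ l) {s t K : ℝ} (hs : 1 ≤ s)
    (ht : 0 < t) (hK : ∀ x ∈ Ioc t (s * t), ‖deriv ρ x‖ ≤ K) :
    |ρ (s * t) - ρ t| ≤ K * ((s - 1) * t) := by
  have hts : t ≤ s * t := le_mul_of_one_le_left ht.le hs
  have hFTC : ρ (s * t) - ρ t = ∫ x in t..(s * t), deriv ρ x := by
    rw [(h.locAC t ht (s * t) hts).2 (s * t) ⟨hts, le_rfl⟩]; ring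
  rw [hFTC, ← Real.norm_eq_abs]
  calc _ ≤ K * |s * t - t| :=
        intervalIntegral.norm_integral_le_of_norm_le_const (by rwa [uIoc_of_le hts])
    _ = K * ((s - 1) * t) := by rw [abs_of_nonneg (by linarith)]; ring

lemma tendsto_sub_mul_log (h : IsProximateOrder ρ l) {s : ℝ} (hs : 1 ≤ s) :
    Tendsto (fun t => (ρ (s * t) - ρ t) * Real.log t) atTop (𝓝 0) := by
  rw [Metric.tendsto_atTop]
  intro ε hε
  obtain ⟨R, hR⟩ := Metric.tendsto_atTop.1 h.tendsto_deriv (ε / s) (by positivity)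
  refine ⟨max R 2, fun t ht => ?_⟩
  have ht0 : 0 < t := by linarith [le_max_right R 2]
  have hlog : 0 < Real.log t := Real.log_pos (by linarith [le_max_right R 2])
  -- `|ρ'(x)| ≤ ε / (s x log x) ≤ ε / (s t log t)` on `(t, s t]`
  have hderiv : ∀ x ∈ Ioc t (s * t), ‖deriv ρ x‖ ≤ ε / s / (t * Real.log t) := by
    intro x hx
    have htx : t ≤ x := hx.1.le
    have hx0 : 0 < x := ht0.trans_le htx
    rw [le_div_iff₀ (by positivity)]
    calc ‖deriv ρ x‖ * (t * Real.log t)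
        ≤ ‖deriv ρ x‖ * (x * Real.log x) := by
          gcongr
      _ = ‖x * Real.log x * deriv ρ x‖ := by
          rw [norm_mul, norm_mul, Real.norm_of_nonneg hx0.le,
            Real.norm_of_nonneg (Real.log_nonneg (by linarith [le_max_right R 2]))]
          ring
      _ ≤ ε / s := by
          simpa using (hR x ((le_max_left R 2).trans (ht.trans hx.1.le))).le
  rw [dist_zero_right, norm_mul, Real.norm_eq_abs, Real.norm_of_nonneg hlog.le]
  calc |ρ (s * t) - ρ t| * Real.log t
      ≤ ε / s / (t * Real.log t) * ((s - 1) * t) * Real.log t := by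
        gcongr; exact h.abs_sub_le_of_norm_deriv_le hs ht0 hderiv
    _ = ε * (s - 1) / s := by field_simp
    _ < ε := by rw [div_lt_iff₀ (by linarith)]; nlinarith

lemma tendsto_V_mul_div_V (h : IsProximateOrder ρ l) {s : ℝ} (hs : 1 ≤ s) :
    Tendsto (fun t => V ρ (s * t) / V ρ t) atTop (𝓝 (s ^ l)) := by
  have hs0 : 0 < s := one_pos.trans_le hs
  have hexp : Tendsto
      (fun t => Real.exp (ρ (s * t) * Real.log s + (ρ (s * t) - ρ t) * Real.log t))
      atTop (𝓝 (s ^ l)) := by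
    rw [Real.rpow_def_of_pos hs0, mul_comm (Real.log s)]
    refine (Real.continuous_exp.tendsto _).comp ?_
    simpa using ((h.tendsto_lim.comp (tendsto_id.const_mul_atTop hs0)).mul_const _).add
      (h.tendsto_sub_mul_log hs)
  refine hexp.congr' ?_
  filter_upwards [eventually_gt_atTop 0] with t ht
  rw [V, V, Real.rpow_def_of_pos (mul_pos hs0 ht), Real.rpow_def_of_pos ht, ← Real.exp_sub,
    Real.log_mul hs0.ne' ht.ne']
  ring_nf

lemma tendsto_V_div_V_mul (h : IsProximateOrder ρ l) {s : ℝ} (hs : 0 < s) :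
    Tendsto (fun t => V ρ t / V ρ (s * t)) atTop (𝓝 (s ^ (-l))) := by
  rcases le_or_gt 1 s with hs1 | hs1
  · simpa [Real.rpow_neg hs.le] using (h.tendsto_V_mul_div_V hs1).inv₀ (by positivity)
  · have hinv : 1 ≤ s⁻¹ := one_le_inv₀ hs |>.2 hs1.le
    have := (h.tendsto_V_mul_div_V hinv).comp (tendsto_id.const_mul_atTop hs)
    rw [Real.inv_rpow hs.le, ← Real.rpow_neg hs.le] at this
    refine this.congr fun t => ?_
    simp [inv_mul_cancel_left₀ hs.ne']

end IsProximateOrder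

lemma eq_mul_one_sub_exp_of_add_eq {ψ : ℝ → ℂ} {l : ℝ} (hl : l ≠ 0)
    (hψ : ∀ a b, ψ (a + b) = ψ a + ((Real.exp (l * a) : ℝ) : ℂ) * ψ b) (a : ℝ) :
    ψ a = ψ 1 / (1 - ((Real.exp l : ℝ) : ℂ)) * (1 - ((Real.exp (l * a) : ℝ) : ℂ)) := by
  have hexp : 1 - ((Real.exp l : ℝ) : ℂ) ≠ 0 := by
    rw [sub_ne_zero, ne_comm, Ne, Complex.ofReal_eq_one, Real.exp_eq_one_iff]
    exact hl
  -- expand `ψ (a + 1) = ψ (1 + a)` in both ways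
  have hswap := (hψ a 1).symm.trans ((congrArg ψ (add_comm a 1)).trans (hψ 1 a))
  rw [mul_one] at hswap
  rw [div_mul_eq_mul_div, eq_div_iff hexp]
  linear_combination hswap

lemma eq_mul_of_add_eq {ψ : ℝ → ℂ} (hψ : ∀ a b, ψ (a + b) = ψ a + ψ b)
    (hψ0 : Tendsto ψ (𝓝[>] 0) (𝓝 0)) (a : ℝ) : ψ a = a * ψ 1 := by
  let L : ℝ →+ ℂ := AddMonoidHom.mk' ψ hψ
  have hneg : ∀ x, ψ (-x) = -ψ x := map_neg L
  have hleft : Tendsto ψ (𝓝[<] 0) (𝓝 0) := by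
    have := (hψ0.comp (neg_zero (G := ℝ) ▸ tendsto_neg_nhdsLT)).neg
    simpa [Function.comp_def, hneg] using this
  have hcont : Continuous L := by
    refine continuous_of_continuousAt_zero L ?_
    rw [continuousAt_iff_continuous_left'_right', ContinuousWithinAt, ContinuousWithinAt,
      map_zero]
    exact ⟨hleft, hψ0⟩
  simpa [L] using map_real_smul L hcont a 1

lemma indicator_one_div {S : Set ℝ} {s : ℝ} (hs : s ≠ 0) (x : ℝ) :
    S.indicator (1 : ℝ → ℝ) (x / s) = (s • S).indicator 1 x := by
  have hmem : x ∈ s • S ↔ x / s ∈ S := by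
    rw [mem_smul_set_iff_inv_smul_mem₀ hs, smul_eq_mul, inv_mul_eq_div]
  by_cases h : x / s ∈ S
  · rw [indicator_of_mem h, indicator_of_mem (hmem.2 h)]; rfl
  · rw [indicator_of_notMem h, indicator_of_notMem (mt hmem.1 h)]

lemma IsTest.comp_div {f : ℝ → ℝ} (hf : IsTest f) {s : ℝ} (hs : 0 < s) :
    IsTest (fun x => f (x / s)) := by
  obtain ⟨hcont, hcpt, hsupp⟩ := hf
  let φ : ℝ ≃ₜ ℝ := Homeomorph.mulRight₀ s⁻¹ (inv_ne_zero hs.ne')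
  have hφ : (fun x => f (x / s)) = f ∘ φ := by ext x; simp [φ, div_eq_mul_inv]
  refine ⟨hcont.comp (continuous_id.div_const s), hφ ▸ hcpt.comp_homeomorph φ, ?_⟩
  rw [hφ, tsupport_comp_eq_preimage]
  intro x hx
  have : 0 < x * s⁻¹ := hsupp hx
  exact pos_of_mul_pos_left this (inv_pos.2 hs).le

/-- A continuous trapezoid: `1` on `[u + 1/(n+1), v]` and `0` off `(u, v + 1/(n+1))`. -/
def approxIoc (u v : ℝ) (n : ℕ) (x : ℝ) : ℝ :=
  max 0 (min 1 (min ((n + 1) * (x - u)) (1 - (n + 1) * (x - v))))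

lemma continuous_approxIoc (u v : ℝ) (n : ℕ) : Continuous (approxIoc u v n) := by
  unfold approxIoc; fun_prop

lemma abs_approxIoc_le (u v : ℝ) (n : ℕ) (x : ℝ) :
    |approxIoc u v n x| ≤ (Icc u (v + 1)).indicator 1 x := by
  have hn : (0 : ℝ) ≤ n := n.cast_nonneg
  have h0 : 0 ≤ approxIoc u v n x := le_max_left _ _
  rw [abs_of_nonneg h0]
  by_cases hx : x ∈ Icc u (v + 1)
  · rw [indicator_of_mem hx, Pi.one_apply]
    exact max_le zero_le_one (min_le_left _ _)
  · rw [indicator_of_notMem hx]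
    refine max_le le_rfl (min_le_of_right_le ?_)
    rcases not_and_or.1 hx with hxu | hxv
    · exact min_le_of_left_le (by nlinarith [not_le.1 hxu])
    · exact min_le_of_right_le (by nlinarith [not_le.1 hxv])

lemma isTest_approxIoc {u : ℝ} (hu : 0 < u) (v : ℝ) (n : ℕ) : IsTest (approxIoc u v n) := by
  have hsupp : tsupport (approxIoc u v n) ⊆ Icc u (v + 1) := by
    refine closure_minimal (fun x hx => ?_) isClosed_Icc
    by_contra hx'
    have := abs_approxIoc_le u v n x
    rw [indicator_of_notMem hx', abs_nonpos_iff] at this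
    exact hx this
  exact ⟨continuous_approxIoc u v n, .of_isClosed_subset isCompact_Icc (isClosed_tsupport _) hsupp,
    hsupp.trans fun x hx => hu.trans_le hx.1⟩

lemma tendsto_approxIoc (u v x : ℝ) :
    Tendsto (approxIoc u v · x) atTop (𝓝 ((Ioc u v).indicator 1 x)) := by
  have hlarge : ∀ d : ℝ, 0 < d → ∀ᶠ n : ℕ in atTop, 1 ≤ (n + 1 : ℝ) * d := fun d hd =>
    ((tendsto_natCast_atTop_atTop.atTop_add tendsto_const_nhds).atTop_mul_const hd
      ).eventually_ge_atTop 1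
  refine tendsto_const_nhds.congr' ?_
  rcases le_or_gt x u with hxu | hux
  · refine .of_forall fun n => ?_
    have : (n + 1 : ℝ) * (x - u) ≤ 0 := mul_nonpos_of_nonneg_of_nonpos (by positivity) (by linarith)
    dsimp only
    rw [indicator_of_notMem fun hx => (not_lt.2 hxu) hx.1, approxIoc, max_eq_left]
    exact min_le_of_right_le (min_le_of_left_le this)
  rcases le_or_gt x v with hxv | hvx
  · filter_upwards [hlarge _ (sub_pos.2 hux)] with n hn
    have : 1 ≤ 1 - (n + 1 : ℝ) * (x - v) := by nlinarith [n.cast_nonneg (α := ℝ)]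
    rw [indicator_of_mem (mem_Ioc.2 ⟨hux, hxv⟩), Pi.one_apply, approxIoc,
      min_eq_left (le_min hn this), max_eq_right zero_le_one]
  · filter_upwards [hlarge _ (sub_pos.2 hvx)] with n hn
    rw [indicator_of_notMem fun hx => (not_le.2 hvx) hx.2, approxIoc, max_eq_left]
    exact min_le_of_right_le (min_le_of_right_le (by linarith))

namespace RadonC

section

variable (ν : RadonC)

lemma integrableOn_dir {A : Set ℝ} {p q : ℝ} (hp : 0 < p) (hA : A ⊆ Icc p q) :
    IntegrableOn ν.dir A ν.var := by
  refine IntegrableOn.mono_set ?_ hA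
  exact Integrable.mono' (integrableOn_const (C := (1 : ℝ)) (ν.locFin p q hp).ne)
    ν.measurable_dir.aestronglyMeasurable.restrict
    (ae_restrict_of_ae (ν.unimodular.mono fun x hx => hx.le))

lemma intervalIntegrable_dir {u v : ℝ} (hu : 0 < u) (hv : 0 < v) :
    IntervalIntegrable ν.dir ν.var u v :=
  (intervalIntegrable_iff).2 <| ν.integrableOn_dir (lt_min hu hv) uIoc_subset_uIcc

lemma set_Ioc_eq_intervalIntegral {u v : ℝ} (huv : u ≤ v) :
    ν.set (Ioc u v) = ∫ x in u..v, ν.dir x ∂ν.var :=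
  (intervalIntegral.integral_of_le huv).symm

lemma norm_set_le (S : Set ℝ) : ‖ν.set S‖ ≤ (ν.var S).toReal := by
  refine (norm_integral_le_integral_norm _).trans_eq ?_
  rw [integral_congr_ae (g := fun _ => (1 : ℝ)) (ae_restrict_of_ae ν.unimodular),
    setIntegral_const, smul_eq_mul, mul_one, measureReal_def]

/-- The measure `E ↦ c · ν(s E)` (for `c ≥ 0`). -/
def dilate {s : ℝ} (hs : 0 < s) (c : ℝ) : RadonC where
  var := ENNReal.ofReal c • ν.var.map (· / s)
  dir y := ν.dir (s * y)
  measurable_dir := ν.measurable_dir.comp (measurable_const_mul s)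
  unimodular := by
    refine Measure.ae_smul_measure ?_ _
    refine (ae_map_iff (measurable_div_const s).aemeasurable
      (measurableSet_eq_fun (ν.measurable_dir.comp (measurable_const_mul s)).norm
        measurable_const)).2 ?_
    simpa only [Function.comp_apply, mul_div_cancel₀ _ hs.ne'] using ν.unimodular
  locFin a b ha := by
    have hpre : (· / s) ⁻¹' Icc a b = Icc (a * s) (b * s) := by
      ext x; simp [le_div_iff₀ hs, div_le_iff₀ hs]
    rw [Measure.smul_apply, Measure.map_apply (measurable_div_const s) measurableSet_Icc, hpre]
    exact ENNReal.mul_lt_top ENNReal.ofReal_lt_top (ν.locFin _ _ (mul_pos ha hs))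
  conc := by
    have hpre : (· / s) ⁻¹' Iic 0 = Iic 0 := by
      ext x; simp [div_le_iff₀ hs]
    rw [Measure.smul_apply, Measure.map_apply (measurable_div_const s) measurableSet_Iic, hpre,
      ν.conc, smul_zero]

lemma testInt_dilate {s c : ℝ} (hs : 0 < s) (hc : 0 ≤ c) {g : ℝ → ℝ} (hg : Measurable g) :
    (ν.dilate hs c).testInt g = c * ∫ x, (g (x / s) : ℂ) * ν.dir x ∂ν.var := by
  have hm : AEStronglyMeasurable (fun y => (g y : ℂ) * ν.dir (s * y)) (ν.var.map (· / s)) :=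
    ((Complex.measurable_ofReal.comp hg).mul
      (ν.measurable_dir.comp (measurable_const_mul s))).aestronglyMeasurable
  simp only [testInt, dilate]
  rw [integral_smul_measure, integral_map (measurable_div_const s).aemeasurable hm,
    ENNReal.toReal_ofReal hc, Complex.real_smul]
  simp only [mul_div_cancel₀ _ hs.ne']

/-- `ν(s E) = s ^ l ν(E)` for all `s > 0`, tested against test functions. -/
def IsHomogeneous (l : ℝ) : Prop :=
  ∀ s : ℝ, 0 < s → ∀ f : ℝ → ℝ, IsTest f →
    ν.testInt (fun x => f (x / s)) = ((s ^ l : ℝ) : ℂ) * ν.testInt f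

def logPrimitive (x : ℝ) : ℂ := ∫ y in (1)..(Real.exp x), ν.dir y ∂ν.var

end

variable {ν : RadonC}

lemma tendsto_testInt_of_tendsto_indicator {g : ℕ → ℝ → ℝ} {A : Set ℝ} {p q : ℝ} (hp : 0 < p)
    (hA : MeasurableSet A) (hg : ∀ n, Measurable (g n))
    (hbound : ∀ n x, |g n x| ≤ (Icc p q).indicator 1 x)
    (hlim : ∀ x, Tendsto (g · x) atTop (𝓝 (A.indicator 1 x))) :
    Tendsto (fun n => ν.testInt (g n)) atTop (𝓝 (ν.set A)) := by
  have hset : ν.set A = ∫ x, ((A.indicator 1 x : ℝ) : ℂ) * ν.dir x ∂ν.var := by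
    rw [set, ← integral_indicator hA]
    congr 1 with x
    by_cases hx : x ∈ A <;> simp [hx]
  rw [hset]
  refine tendsto_integral_of_dominated_convergence ((Icc p q).indicator 1)
    (fun n => ((Complex.measurable_ofReal.comp (hg n)).mul ν.measurable_dir).aestronglyMeasurable)
    ((integrable_indicator_iff measurableSet_Icc).2 (integrableOn_const (ν.locFin p q hp).ne))
    (fun n => ν.unimodular.mono fun x hx => ?_)
    (.of_forall fun x => ((Complex.continuous_ofReal.tendsto _).comp (hlim x)).mul_const _)
  rw [norm_mul, hx, mul_one, Complex.norm_real, Real.norm_eq_abs]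
  exact hbound n x

lemma intervalIntegral_eq_logPrimitive_sub {u v : ℝ} (hu : 0 < u) (hv : 0 < v) :
    ∫ x in u..v, ν.dir x ∂ν.var = ν.logPrimitive (Real.log v) - ν.logPrimitive (Real.log u) := by
  rw [logPrimitive, logPrimitive, Real.exp_log hu, Real.exp_log hv,
    intervalIntegral.integral_interval_sub_left (ν.intervalIntegrable_dir one_pos hv)
      (ν.intervalIntegrable_dir one_pos hu)]

lemma tendsto_logPrimitive_nhdsGT : Tendsto ν.logPrimitive (𝓝[>] 0) (𝓝 0) := by
  have hvar : Tendsto (fun y => ν.var (Ioc 1 y)) (𝓝[>] 1) (𝓝 0) := by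
    have := tendsto_measure_biInter_gt (μ := ν.var) (s := fun y => Ioc 1 y) (a := 1)
      (fun _ _ => measurableSet_Ioc.nullMeasurableSet)
      (fun _ _ _ hij => Ioc_subset_Ioc_right hij)
      ⟨2, one_lt_two, (measure_mono Ioc_subset_Icc_self |>.trans_lt (ν.locFin 1 2 one_pos)).ne⟩
    have hempty : (⋂ y > (1 : ℝ), Ioc 1 y) = ∅ := by
      refine eq_empty_of_forall_notMem fun x hx => ?_
      simp only [mem_iInter, mem_Ioc] at hx
      have h1x := (hx 2 one_lt_two).1
      linarith [(hx ((1 + x) / 2) (by linarith)).2]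
    rwa [hempty, measure_empty] at this
  have hexp : Tendsto Real.exp (𝓝[>] 0) (𝓝[>] 1) := by
    simpa using Real.continuous_exp.continuousWithinAt.tendsto_nhdsWithin (x := 0)
      (s := Ioi 0) (t := Ioi 1) fun _ hx => Real.one_lt_exp_iff.2 hx
  refine squeeze_zero_norm' ?_ ((ENNReal.tendsto_toReal ENNReal.zero_ne_top).comp
    (hvar.comp hexp))
  filter_upwards [self_mem_nhdsWithin] with x hx
  rw [logPrimitive, intervalIntegral.integral_of_le (Real.one_le_exp (le_of_lt hx))]
  exact ν.norm_set_le _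

variable {l : ℝ}

theorem IsHomogeneous.set_Ioc_mul (hν : ν.IsHomogeneous l) {s u : ℝ} (hs : 0 < s)
    (hu : 0 < u) (v : ℝ) :
    ν.set (Ioc (s * u) (s * v)) = ((s ^ l : ℝ) : ℂ) * ν.set (Ioc u v) := by
  have hlim := tendsto_testInt_of_tendsto_indicator (ν := ν) hu measurableSet_Ioc
    (fun n => (continuous_approxIoc u v n).measurable) (abs_approxIoc_le u v)
    (tendsto_approxIoc u v)
  have hlim_div : Tendsto (fun n => ν.testInt (fun x => approxIoc u v n (x / s))) atTop
      (𝓝 (ν.set (Ioc (s * u) (s * v)))) := by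
    refine tendsto_testInt_of_tendsto_indicator (q := s * (v + 1)) (mul_pos hs hu)
      measurableSet_Ioc (fun n => ((continuous_approxIoc u v n).measurable.comp
        (measurable_div_const s))) (fun n x => ?_) (fun x => ?_)
    · simpa only [indicator_one_div hs.ne', LinearOrderedField.smul_Icc hs]
        using abs_approxIoc_le u v n (x / s)
    · simpa only [indicator_one_div hs.ne', LinearOrderedField.smul_Ioc hs]
        using tendsto_approxIoc u v (x / s)
  refine tendsto_nhds_unique hlim_div ?_
  simpa only [hν s hs _ (isTest_approxIoc hu v _)] using hlim.const_mul ((s ^ l : ℝ) : ℂ)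

theorem IsHomogeneous.intervalIntegral_mul (hν : ν.IsHomogeneous l) {s u v : ℝ} (hs : 0 < s)
    (hu : 0 < u) (hv : 0 < v) :
    ∫ x in (s * u)..(s * v), ν.dir x ∂ν.var
      = ((s ^ l : ℝ) : ℂ) * ∫ x in u..v, ν.dir x ∂ν.var := by
  simp only [intervalIntegral]
  rw [← set, ← set, hν.set_Ioc_mul hs hu, hν.set_Ioc_mul hs hv, set, set, mul_sub]

theorem IsHomogeneous.logPrimitive_add (hν : ν.IsHomogeneous l) (a b : ℝ) :
    ν.logPrimitive (a + b)
      = ν.logPrimitive a + ((Real.exp (l * a) : ℝ) : ℂ) * ν.logPrimitive b := by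
  have hscale := hν.intervalIntegral_mul (Real.exp_pos a) one_pos (Real.exp_pos b)
  rw [mul_one, ← Real.exp_add, Real.rpow_def_of_pos (Real.exp_pos a), Real.log_exp,
    mul_comm a] at hscale
  rw [logPrimitive, logPrimitive, logPrimitive, ← hscale, Real.exp_add,
    intervalIntegral.integral_add_adjacent_intervals
      (ν.intervalIntegrable_dir one_pos (Real.exp_pos a))
      (ν.intervalIntegrable_dir (Real.exp_pos a) (by positivity))]

theorem IsHomogeneous.exists_intervalIntegral_eq (hν : ν.IsHomogeneous l) :
    ∃ c : ℂ, ∀ u v : ℝ, 0 < u → 0 < v →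
      ∫ x in u..v, ν.dir x ∂ν.var = c * ((∫ r in u..v, r ^ (l - 1) : ℝ) : ℂ) := by
  rcases eq_or_ne l 0 with rfl | hl
  · have hψ := eq_mul_of_add_eq (fun a b => by simpa using hν.logPrimitive_add a b)
      tendsto_logPrimitive_nhdsGT
    refine ⟨ν.logPrimitive 1, fun u v hu hv => ?_⟩
    simp_rw [intervalIntegral_eq_logPrimitive_sub hu hv, hψ (Real.log v), hψ (Real.log u),
      zero_sub, Real.rpow_neg_one, integral_inv_of_pos hu hv, Real.log_div hv.ne' hu.ne']
    push_cast
    ring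
  · have hψ := eq_mul_one_sub_exp_of_add_eq hl hν.logPrimitive_add
    refine ⟨-(l * (ν.logPrimitive 1 / (1 - ((Real.exp l : ℝ) : ℂ)))), fun u v hu hv => ?_⟩
    have hexp : ∀ x : ℝ, 0 < x → Real.exp (l * Real.log x) = x ^ l := fun x hx => by
      rw [Real.rpow_def_of_pos hx, mul_comm]
    have hl1 : l - 1 ≠ -1 := by simpa [sub_eq_iff_eq_add] using hl
    rw [intervalIntegral_eq_logPrimitive_sub hu hv, hψ (Real.log v), hψ (Real.log u),
      hexp u hu, hexp v hv, integral_rpow (.inr ⟨hl1, notMem_uIcc_of_lt hu hv⟩), sub_add_cancel]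
    generalize ν.logPrimitive 1 / (1 - ((Real.exp l : ℝ) : ℂ)) = k
    have hl' : (l : ℂ) ≠ 0 := Complex.ofReal_ne_zero.2 hl
    push_cast
    field_simp
    ring

theorem IsHomogeneous.exists_set_Ioc_eq (hν : ν.IsHomogeneous l) :
    ∃ c : ℂ, ∀ u v : ℝ, 0 < u →
      ν.set (Ioc u v) = ∫ r in Ioc u v, c * ((r ^ (l - 1) : ℝ) : ℂ) := by
  obtain ⟨c, hc⟩ := hν.exists_intervalIntegral_eq
  refine ⟨c, fun u v hu => ?_⟩
  rcases le_total v u with hvu | huv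
  · simp [set, Ioc_eq_empty_of_le hvu]
  · rw [ν.set_Ioc_eq_intervalIntegral huv, hc u v hu (hu.trans_le huv), integral_const_mul,
      integral_complex_ofReal, intervalIntegral.integral_of_le huv]

theorem IsHomogeneous.exists_set_eq (hν : ν.IsHomogeneous l) :
    ∃ c : ℂ, ∀ E : Set ℝ, MeasurableSet E → (∃ a b : ℝ, 0 < a ∧ E ⊆ Icc a b) →
      ν.set E = ∫ r in E, c * ((r ^ (l - 1) : ℝ) : ℂ) := by
  obtain ⟨c, hc⟩ := hν.exists_set_Ioc_eq
  refine ⟨c, fun E hE ⟨a, b, ha, hEab⟩ => ?_⟩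
  set W := Ioc (a / 2) b
  have ha2 : 0 < a / 2 := half_pos ha
  have hdir : Integrable ν.dir (ν.var.restrict W) := ν.integrableOn_dir ha2 Ioc_subset_Icc_self
  have hdens : Integrable (fun r : ℝ => c * ((r ^ (l - 1) : ℝ) : ℂ)) (volume.restrict W) := by
    have hpow : IntegrableOn (fun r : ℝ => ((r ^ (l - 1) : ℝ) : ℂ)) (Icc (a / 2) b) :=
      ContinuousOn.integrableOn_Icc fun x hx => (Complex.continuous_ofReal.continuousAt.comp
        (Real.continuousAt_rpow_const _ _ (.inl (ha2.trans_le hx.1).ne'))).continuousWithinAt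
    exact (hpow.mono_set Ioc_subset_Icc_self).const_mul c
  have hagree : ∀ S, MeasurableSet S → ∀ p q, 0 < p → S ∩ W = Ioc p q →
      ∫ x in S, ν.dir x ∂ν.var.restrict W
        = ∫ r in S, c * ((r ^ (l - 1) : ℝ) : ℂ) ∂volume.restrict W := by
    intro S hS p q hp hSW
    rw [Measure.restrict_restrict hS, Measure.restrict_restrict hS, hSW, ← hc p q hp, set]
  have hEq : (ν.var.restrict W).withDensityᵥ ν.dir
      = (volume.restrict W).withDensityᵥ (fun r : ℝ => c * ((r ^ (l - 1) : ℝ) : ℂ)) := by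
    refine VectorMeasure.ext_of_generateFrom _ ?_
      (BorelSpace.measurable_eq.trans (borel_eq_generateFrom_Ioc ℝ)) (isPiSystem_Ioc id id) ?_
    · rintro _ ⟨p, q, -, rfl⟩
      rw [withDensityᵥ_apply hdir measurableSet_Ioc, withDensityᵥ_apply hdens measurableSet_Ioc]
      exact hagree _ measurableSet_Ioc _ _ (lt_max_of_lt_right ha2) Ioc_inter_Ioc
    · rw [withDensityᵥ_apply hdir .univ, withDensityᵥ_apply hdens .univ]
      exact hagree _ .univ _ _ ha2 (univ_inter W)
  have hEW : E ∩ W = E :=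
    inter_eq_left.2 fun x hx => mem_Ioc.2 ⟨by linarith [(hEab hx).1], (hEab hx).2⟩
  have := congrArg (· E) hEq
  simp only [withDensityᵥ_apply hdir hE, withDensityᵥ_apply hdens hE] at this
  rwa [Measure.restrict_restrict hE, Measure.restrict_restrict hE, hEW] at this

end RadonC

lemma scaledTestInt_mul (ρ : ℝ → ℝ) (μ : RadonC) {t : ℝ} (ht : 0 < t) (s : ℝ)
    (g : ℝ → ℝ) :
    scaledTestInt ρ μ (s * t) g
      = ((V ρ t / V ρ (s * t) : ℝ) : ℂ) * scaledTestInt ρ μ t (fun x => g (x / s)) := by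
  have hV : (V ρ t : ℂ) ≠ 0 := Complex.ofReal_ne_zero.2 (Real.rpow_pos_of_pos ht _).ne'
  simp only [scaledTestInt, div_div, mul_comm t s]
  push_cast
  field_simp

lemma dilate_mem_azarinSet {ρ : ℝ → ℝ} {l : ℝ} (h : IsProximateOrder ρ l) {μ ν : RadonC}
    (hν : ν ∈ AzarinSet ρ μ) {s : ℝ} (hs : 0 < s) :
    ν.dilate hs (s ^ (-l)) ∈ AzarinSet ρ μ := by
  obtain ⟨t, ht, hlim⟩ := hν
  refine ⟨fun n => s * t n, ht.const_mul_atTop hs, fun g hg => ?_⟩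
  rw [ν.testInt_dilate hs (by positivity) hg.1.measurable]
  refine Tendsto.congr' ?_ <| ((Complex.continuous_ofReal.tendsto _).comp
    ((h.tendsto_V_div_V_mul hs).comp ht)).mul (hlim _ (hg.comp_div hs))
  filter_upwards [ht.eventually_gt_atTop 0] with n hn
  exact (scaledTestInt_mul ρ μ hn s g).symm

lemma isHomogeneous_of_forall_wideEq {ρ : ℝ → ℝ} {l : ℝ} (h : IsProximateOrder ρ l)
    {μ ν : RadonC} (hν : ν ∈ AzarinSet ρ μ) (hreg : ∀ σ ∈ AzarinSet ρ μ, WideEq σ ν) :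
    ν.IsHomogeneous l := by
  intro s hs f hf
  have := hreg _ (dilate_mem_azarinSet h hν hs) f hf
  rw [ν.testInt_dilate hs (by positivity) hf.1.measurable] at this
  rw [← this, ← mul_assoc, ← Complex.ofReal_mul, ← Real.rpow_add hs, add_neg_cancel,
    Real.rpow_zero, Complex.ofReal_one, one_mul, RadonC.testInt]

theorem statement10_general (ρ : ℝ → ℝ) (l : ℝ) (h : IsProximateOrder ρ l)
    (μ : RadonC)
    (ν : RadonC) (hν : ν ∈ AzarinSet ρ μ)
    (hreg : ∀ σ ∈ AzarinSet ρ μ, WideEq σ ν) :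
    ∃ c : ℂ, ∀ E : Set ℝ, MeasurableSet E →
      (∃ a b : ℝ, 0 < a ∧ E ⊆ Set.Icc a b) →
      ν.set E = ∫ r in E, c * ((r ^ (l - 1) : ℝ) : ℂ) :=
  (isHomogeneous_of_forall_wideEq h hν hreg).exists_set_eq

/-- Theorem 3.23: if `μ ∈ 𝔐_∞(ρ)` is regular in the sense of
Azarin, with `Fr[μ] = {ν}`, then there is `c ∈ ℂ` such that
`dν(r) = c · r^{ρ∞-1} dr`. -/
theorem statement10 (ρ : ℝ → ℝ) (l : ℝ) (h : IsProximateOrder ρ l)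
    (μ : RadonC) (hμ : MemMInfty ρ μ)
    (ν : RadonC) (hν : ν ∈ AzarinSet ρ μ)
    (hreg : ∀ σ ∈ AzarinSet ρ μ, WideEq σ ν) :
    ∃ c : ℂ, ∀ E : Set ℝ, MeasurableSet E →
      (∃ a b : ℝ, 0 < a ∧ E ⊆ Set.Icc a b) →
      ν.set E = ∫ r in E, c * ((r ^ (l - 1) : ℝ) : ℂ) :=
  statement10_general ρ l h μ ν hν hreg

end
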